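/- arXiv:1805.00492 — 2 statements merged into one kernel-verified Lean document; each statement's English description precedes it below -/
import Mathlib

section
/- For all v, w ∈ ℝ^d, the R-modules A_v and A_w are isomorphic if and only if there exists m ∈ ℤ^d with (C+v) ∩ ℤ^d = m + ((C+w) ∩ ℤ^d) (equivalently, ⌈n_i(v)⌉ = n_i(m) + ⌈n_i(w)⌉ for all i = 1,…,t; equivalently, the chamber of constancy of v is the translate by m of the chamber of constancy of w). -/
open Set

set_option synthInstance.maxHeartbeats 400000
set_option maxHeartbeats 1000000

noncomputable section

/-- The embedding of the lattice `ℤ^d` into `ℝ^d`. -/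
def ιZ (d : ℕ) (m : Fin d → ℤ) : Fin d → ℝ := fun j => (m j : ℝ)

/-- The lattice points of the translated cone `C + v`, where
`C = {x | ∀ i, 0 ≤ n i x}`. -/
def latticePts {d t : ℕ} (n : Fin t → ((Fin d → ℝ) →ₗ[ℝ] ℝ)) (v : Fin d → ℝ) :
    Set (Fin d → ℤ) :=
  {m | ∀ i, 0 ≤ n i (ιZ d m - v)}

/-- The toric algebra `R = k[C ∩ ℤ^d]`: the `k`-subalgebra of the Laurent
polynomial algebra `L = AddMonoidAlgebra k (Fin d → ℤ)` spanned (equivalently,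
generated, since the monomial set is closed under multiplication and contains `1`)
by the monomials `x^m` with `m ∈ C ∩ ℤ^d`. -/
def toricR (k : Type) [Field k] (d t : ℕ) (n : Fin t → ((Fin d → ℝ) →ₗ[ℝ] ℝ)) :
    Subalgebra k (AddMonoidAlgebra k (Fin d → ℤ)) :=
  Algebra.adjoin k
    {f | ∃ m : Fin d → ℤ, (∀ i, 0 ≤ n i (ιZ d m)) ∧ f = AddMonoidAlgebra.single m 1}

/-- The conic module `A_v`: the `R`-submodule of `L` spanned by the monomials `x^m`
with `m ∈ (C + v) ∩ ℤ^d`. -/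
def conicA (k : Type) [Field k] (d t : ℕ) (n : Fin t → ((Fin d → ℝ) →ₗ[ℝ] ℝ))
    (v : Fin d → ℝ) :
    Submodule ↥(toricR k d t n) (AddMonoidAlgebra k (Fin d → ℤ)) :=
  Submodule.span ↥(toricR k d t n)
    {f | ∃ m : Fin d → ℤ, (∀ i, 0 ≤ n i (ιZ d m - v)) ∧ f = AddMonoidAlgebra.single m 1}

/-!
An `R`-linear map `φ : A_v → A_w` is multiplication by a fixed element of the fraction field
of `L`: a monomial `x^s` with `s` deep inside `C - v` maps `A_v` into `R`, and `R`-linearity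
gives `a' * φ a = a * φ a'`. For `a = x^p` and `a' = φ⁻¹ x^q` this says that `φ x^p` divides
the monomial `x^(p+q)` in `L`; since `ℤ^d` is torsion-free, extreme terms cannot cancel, so
`φ x^p = c • x^e` and `φ` is multiplication by `c • x^(e-p)`. Such a map sends `A_v` onto
`A_w` exactly when the lattice points of `C + w` are those of `C + v` translated by `e - p`.
-/

open AddMonoidAlgebra
open scoped Pointwise

namespace AddMonoidAlgebra

variable {R A : Type*} [Semiring R]

theorem single_mem_supported_iff {S : Set A} {p : A} {c : R} (hc : c ≠ 0) :
    single p c ∈ supported R R S ↔ p ∈ S := by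
  rw [mem_supported, coeff_single, Finsupp.support_single _ hc, Finset.coe_singleton,
    Set.singleton_subset_iff]

theorem mul_mem_supported [Add A] {S T : Set A} {f g : R[A]} (hf : f ∈ supported R R S)
    (hg : g ∈ supported R R T) : f * g ∈ supported R R (S + T) := by
  classical
  intro x hx
  obtain ⟨a, ha, b, hb, rfl⟩ := Finset.mem_add.1 (support_coeff_mul_subset f g hx)
  exact Set.add_mem_add (hf ha) (hg hb)

theorem single_mul_single_mul_eq_self [AddMonoid A] {u u' : A} {c c' : R} (hu : u' + u = 0)
    (hc : c' * c = 1) (f : R[A]) : single u' c' * (single u c * f) = f := by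
  rw [← mul_assoc, single_mul_single, hu, hc, ← one_def, one_mul]

theorem exists_eq_single_of_mul_eq_single [NoZeroDivisors R] [Add A] [TwoUniqueSums A]
    {f g : R[A]} (hf : f ≠ 0) (hg : g ≠ 0) {q : A} {r : R} (h : f * g = single q r) :
    ∃ a c, f = single a c := by
  classical
  set F := f.coeff.support
  set G := g.coeff.support
  have hq : ∀ p ∈ F ×ˢ G, UniqueAdd F G p.1 p.2 → p.1 + p.2 = q := by
    intro p hp hu
    rw [Finset.mem_product, Finsupp.mem_support_iff, Finsupp.mem_support_iff] at hp
    have hne : (f * g).coeff (p.1 + p.2) ≠ 0 := by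
      rw [coeff_mul_add_of_uniqueAdd hu]
      exact mul_ne_zero hp.1 hp.2
    rw [h, coeff_single] at hne
    by_contra hpq
    exact hne (Finsupp.single_eq_of_ne hpq)
  have hcard : F.card * G.card ≤ 1 := by
    by_contra! hlt
    obtain ⟨p₁, hp₁, p₂, hp₂, hne, hu₁, hu₂⟩ :=
      TwoUniqueSums.uniqueAdd_of_one_lt_card hlt
    have := hu₁ (Finset.mem_product.1 hp₂).1 (Finset.mem_product.1 hp₂).2
      ((hq p₂ hp₂ hu₂).trans (hq p₁ hp₁ hu₁).symm)
    exact hne (Prod.ext this.1 this.2).symm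
  have hF : 0 < F.card :=
    Finset.card_pos.2 (Finsupp.support_nonempty_iff.2 (coeff_eq_zero.not.2 hf))
  have hG : 0 < G.card :=
    Finset.card_pos.2 (Finsupp.support_nonempty_iff.2 (coeff_eq_zero.not.2 hg))
  obtain ⟨a, -, ha⟩ := Finsupp.card_support_eq_one.1
    (le_antisymm ((Nat.le_mul_of_pos_right _ hG).trans hcard) hF)
  exact ⟨a, f.coeff a, coeff_injective ha⟩

end AddMonoidAlgebra

theorem mul_apply_comm_of_mul_mem {k L : Type*} [CommRing k] [CommRing L] [IsDomain L]
    [Algebra k L] {R : Subalgebra k L} {M N : Submodule R L} (φ : M →ₗ[R] N) {s : L}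
    (hs : s ≠ 0) (hsM : ∀ a ∈ M, s * a ∈ R) (a a' : M) :
    (a' : L) * φ a = a * φ a' := by
  have hsmul : (⟨s * a', hsM a' a'.2⟩ : R) • a = (⟨s * a, hsM a a.2⟩ : R) • a' :=
    Subtype.ext (by simp only [Submodule.coe_smul, Subalgebra.smul_def, smul_eq_mul]; ring)
  have := congrArg (fun x : N => (x : L)) (congrArg φ hsmul)
  simp only [map_smul, Submodule.coe_smul, Subalgebra.smul_def, smul_eq_mul] at this
  exact mul_left_cancel₀ hs (by linear_combination this)

section Lattice

variable {d t : ℕ} (n : Fin t → ((Fin d → ℝ) →ₗ[ℝ] ℝ))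

@[simp]
theorem ιZ_zero : ιZ d 0 = 0 := by
  ext; simp [ιZ]

theorem ιZ_add (a b : Fin d → ℤ) : ιZ d (a + b) = ιZ d a + ιZ d b := by
  ext; simp [ιZ]

theorem add_latticePts_subset (v w : Fin d → ℝ) :
    latticePts n v + latticePts n w ⊆ latticePts n (v + w) := by
  rintro _ ⟨p, hp, q, hq, rfl⟩ i
  have : ιZ d (p + q) - (v + w) = (ιZ d p - v) + (ιZ d q - w) := by rw [ιZ_add]; abel
  rw [this, map_add]
  exact add_nonneg (hp i) (hq i)

theorem latticePts_nonempty (hfull : (interior {x | ∀ i, 0 ≤ n i x}).Nonempty)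
    (v : Fin d → ℝ) : (latticePts n v).Nonempty := by
  obtain ⟨u, hu⟩ := hfull
  obtain ⟨ε, hε, hball⟩ := Metric.isOpen_iff.1 isOpen_interior u hu
  -- Rounding `y` moves it by less than `1`, i.e. by less than `ε` after scaling by `ε / 2`.
  set y := v + (2 / ε) • u
  set z := ιZ d fun j => ⌊y j⌋
  refine ⟨fun j => ⌊y j⌋, fun i => ?_⟩
  have hround : ‖z - y‖ < 1 := by
    refine (pi_norm_lt_iff one_pos).2 fun j => ?_
    simp only [z, ιZ, Pi.sub_apply, Real.norm_eq_abs]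
    rw [abs_sub_comm, Int.self_sub_floor, abs_of_nonneg (Int.fract_nonneg _)]
    exact Int.fract_lt_one _
  have hmem : (ε / 2) • (z - v) ∈ Metric.ball u ε := by
    have hε2 : ε / 2 * (2 / ε) = 1 := by field_simp
    have : (ε / 2) • (z - v) - u = (ε / 2) • (z - y) := by
      simp only [y, smul_sub, smul_add, smul_smul, hε2, one_smul]
      abel
    rw [Metric.mem_ball, dist_eq_norm, this, norm_smul, Real.norm_of_nonneg (by positivity)]
    nlinarith
  have := interior_subset (hball hmem) i
  rw [map_smul, smul_eq_mul] at this
  exact nonneg_of_mul_nonneg_right this (by positivity)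

end Lattice

section Conic

variable {k : Type} [Field k] {d t : ℕ} {n : Fin t → ((Fin d → ℝ) →ₗ[ℝ] ℝ)}

theorem mem_toricR_iff {r : k[Fin d → ℤ]} :
    r ∈ toricR k d t n ↔ r ∈ supported k k (latticePts n 0) := by
  constructor
  · intro hr
    induction hr using Algebra.adjoin_induction with
    | mem x hx =>
      obtain ⟨m, hm, rfl⟩ := hx
      exact (single_mem_supported_iff one_ne_zero).2 fun i => by simpa using hm i
    | algebraMap c =>
      rw [Algebra.algebraMap_eq_smul_one, one_def]
      exact Submodule.smul_mem _ c ((single_mem_supported_iff one_ne_zero).2 fun i => by simp)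
    | add x y _ _ hx hy => exact add_mem hx hy
    | mul x y _ _ hx hy =>
      exact supported_mono (by simpa using add_latticePts_subset n 0 0) (mul_mem_supported hx hy)
  · intro hr
    rw [supported_eq_span_single] at hr
    refine (Submodule.span_le (p := Subalgebra.toSubmodule (toricR k d t n))).2 ?_ hr
    rintro _ ⟨m, hm, rfl⟩
    exact Algebra.subset_adjoin ⟨m, fun i => by simpa using hm i, rfl⟩

theorem mem_conicA_iff {v : Fin d → ℝ} {x : k[Fin d → ℤ]} :
    x ∈ conicA k d t n v ↔ x ∈ supported k k (latticePts n v) := by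
  constructor
  · intro hx
    induction hx using Submodule.span_induction with
    | mem x hx =>
      obtain ⟨m, hm, rfl⟩ := hx
      exact (single_mem_supported_iff one_ne_zero).2 hm
    | zero => exact zero_mem _
    | add x y _ _ hx hy => exact add_mem hx hy
    | smul r x _ hx =>
      rw [Subalgebra.smul_def, smul_eq_mul]
      exact supported_mono (by simpa using add_latticePts_subset n 0 v)
        (mul_mem_supported (mem_toricR_iff.1 r.2) hx)
  · intro hx
    rw [supported_eq_span_single] at hx
    exact Submodule.span_le_restrictScalars k _ _
      (Submodule.span_mono (by rintro _ ⟨m, hm, rfl⟩; exact ⟨m, hm, rfl⟩) hx)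

theorem single_mem_conicA_iff {v : Fin d → ℝ} {p : Fin d → ℤ} {c : k} (hc : c ≠ 0) :
    single p c ∈ conicA k d t n v ↔ p ∈ latticePts n v :=
  mem_conicA_iff.trans (single_mem_supported_iff hc)

theorem single_mul_mem_conicA_iff {v w : Fin d → ℝ} {u : Fin d → ℤ}
    (h : latticePts n w = (u + ·) '' latticePts n v) {c : k} (hc : c ≠ 0)
    {f : k[Fin d → ℤ]} : single u c * f ∈ conicA k d t n w ↔ f ∈ conicA k d t n v := by
  rw [mem_conicA_iff, mem_conicA_iff, mem_supported, mem_supported,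
    support_coeff_single_mul _ _ (fun y => by simp [hc]), Finset.coe_map, h]
  exact Set.image_subset_image_iff (add_right_injective u)

def conicAMulSingleEquiv {v w : Fin d → ℝ} (u : Fin d → ℤ)
    (h : latticePts n w = (u + ·) '' latticePts n v) :
    conicA k d t n v ≃ₗ[toricR k d t n] conicA k d t n w where
  toFun a := ⟨single u 1 * (a : k[Fin d → ℤ]),
    (single_mul_mem_conicA_iff h one_ne_zero).2 a.2⟩
  invFun b := ⟨single (-u) 1 * (b : k[Fin d → ℤ]),
    (single_mul_mem_conicA_iff h one_ne_zero).1 <| by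
      rw [single_mul_single_mul_eq_self (add_neg_cancel u) (one_mul 1)]; exact b.2⟩
  map_add' a b := Subtype.ext (mul_add _ _ _)
  map_smul' r a := Subtype.ext (mul_left_comm _ _ _)
  left_inv a := Subtype.ext (single_mul_single_mul_eq_self (neg_add_cancel u) (one_mul 1) _)
  right_inv b := Subtype.ext (single_mul_single_mul_eq_self (add_neg_cancel u) (one_mul 1) _)

theorem exists_single_mul_eq_of_linearEquiv
    (hfull : (interior {x | ∀ i, 0 ≤ n i x}).Nonempty) {v w : Fin d → ℝ}
    (φ : conicA k d t n v ≃ₗ[toricR k d t n] conicA k d t n w) :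
    ∃ u c, c ≠ 0 ∧
      ∀ a, (φ a : k[Fin d → ℤ]) = single u c * (a : k[Fin d → ℤ]) := by
  obtain ⟨s, hs⟩ := latticePts_nonempty n hfull (-v)
  obtain ⟨p, hp⟩ := latticePts_nonempty n hfull v
  obtain ⟨q, hq⟩ := latticePts_nonempty n hfull w
  have hcomm := mul_apply_comm_of_mul_mem φ.toLinearMap (single_ne_zero.2 one_ne_zero)
    fun a ha => mem_toricR_iff.2 <| supported_mono (by simpa using add_latticePts_subset n (-v) v)
      (mul_mem_supported ((single_mem_supported_iff one_ne_zero).2 hs) (mem_conicA_iff.1 ha))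
  set xp : conicA k d t n v := ⟨single p 1, (single_mem_conicA_iff one_ne_zero).2 hp⟩
  set b := φ.symm ⟨single q 1, (single_mem_conicA_iff one_ne_zero).2 hq⟩
  have hdvd : (φ xp : k[Fin d → ℤ]) * (b : k[Fin d → ℤ]) = single (p + q) 1 := by
    have := hcomm b xp
    simp only [LinearEquiv.coe_coe, b, LinearEquiv.apply_symm_apply] at this
    rw [mul_comm, ← this, single_mul_single, one_mul]
  have hF0 : (φ xp : k[Fin d → ℤ]) ≠ 0 := by simp [xp]
  have hb0 : (b : k[Fin d → ℤ]) ≠ 0 := by simp [b]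
  obtain ⟨e, c, hFe⟩ := exists_eq_single_of_mul_eq_single hF0 hb0 hdvd
  refine ⟨e - p, c, single_ne_zero.1 (hFe ▸ hF0), fun a => ?_⟩
  refine mul_left_cancel₀ (single_ne_zero.2 one_ne_zero : single p (1 : k) ≠ 0) ?_
  calc single p 1 * (φ a : k[Fin d → ℤ])
      = (a : k[Fin d → ℤ]) * (φ xp : k[Fin d → ℤ]) := hcomm a xp
    _ = single p (1 : k) * (single (e - p) c * (a : k[Fin d → ℤ])) := by
      rw [hFe, ← mul_assoc, single_mul_single, one_mul, add_sub_cancel, mul_comm]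

theorem latticePts_eq_image_of_linearEquiv {v w : Fin d → ℝ}
    (φ : conicA k d t n v ≃ₗ[toricR k d t n] conicA k d t n w) {u : Fin d → ℤ} {c : k}
    (hc : c ≠ 0) (hφ : ∀ a, (φ a : k[Fin d → ℤ]) = single u c * (a : k[Fin d → ℤ])) :
    latticePts n w = (u + ·) '' latticePts n v := by
  ext q
  constructor
  · intro hq
    set a := φ.symm ⟨single q 1, (single_mem_conicA_iff one_ne_zero).2 hq⟩
    have ha : single u c * (a : k[Fin d → ℤ]) = single q 1 := by
      rw [← hφ, LinearEquiv.apply_symm_apply]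
    have ha' : (a : k[Fin d → ℤ]) = single (q - u) c⁻¹ := by
      rw [← single_mul_single_mul_eq_self (neg_add_cancel u) (inv_mul_cancel₀ hc) (a : _), ha,
        single_mul_single, mul_one, neg_add_eq_sub]
    exact ⟨q - u, (single_mem_conicA_iff (inv_ne_zero hc)).1 (ha' ▸ a.2), add_sub_cancel _ _⟩
  · rintro ⟨p, hp, rfl⟩
    have := (φ ⟨single p 1, (single_mem_conicA_iff one_ne_zero).2 hp⟩).2
    rw [hφ, single_mul_single, mul_one] at this
    exact (single_mem_conicA_iff hc).1 this

end Conic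

theorem stmt_7_general
    (d t : ℕ)
    (n : Fin t → ((Fin d → ℝ) →ₗ[ℝ] ℝ))
    (C : Set (Fin d → ℝ)) (hC : C = {x | ∀ i, 0 ≤ n i x})
    (hfull : (interior C).Nonempty)
    (k : Type) [Field k] :
    ∀ v w : Fin d → ℝ,
      Nonempty (↥(conicA k d t n v) ≃ₗ[↥(toricR k d t n)] ↥(conicA k d t n w)) ↔
      ∃ m : Fin d → ℤ, latticePts n v = (fun m' => m + m') '' latticePts n w := by
  subst hC
  intro v w
  constructor
  · rintro ⟨φ⟩
    obtain ⟨u, c, hc, hφ⟩ := exists_single_mul_eq_of_linearEquiv hfull φ.symm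
    exact ⟨u, latticePts_eq_image_of_linearEquiv φ.symm hc hφ⟩
  · rintro ⟨m, hm⟩
    exact ⟨(conicAMulSingleEquiv m hm).symm⟩

/-- `A_v ≅ A_w` as `R`-modules iff the conic lattice set of `v` is a
lattice translate of the conic lattice set of `w`. -/
theorem stmt_7
    (d t : ℕ) (hd : 1 ≤ d)
    (n : Fin t → ((Fin d → ℝ) →ₗ[ℝ] ℝ))
    (hne : ∀ i, n i ≠ 0)
    (hint : ∀ i (m : Fin d → ℤ), ∃ z : ℤ, n i (ιZ d m) = z)
    (hprim : ∀ i (z : ℤ), ∃ m : Fin d → ℤ, n i (ιZ d m) = z)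
    (C : Set (Fin d → ℝ)) (hC : C = {x | ∀ i, 0 ≤ n i x})
    (hfull : (interior C).Nonempty)
    (hpointed : Submodule.span ℝ (Set.range n) = ⊤)
    (hirr : ∀ i, C ⊂ {x | ∀ j, j ≠ i → 0 ≤ n j x})
    (k : Type) [Field k] :
    ∀ v w : Fin d → ℝ,
      Nonempty (↥(conicA k d t n v) ≃ₗ[↥(toricR k d t n)] ↥(conicA k d t n w)) ↔
      ∃ m : Fin d → ℤ, latticePts n v = (fun m' => m + m') '' latticePts n w :=
  stmt_7_general d t n C hC hfull k
end
end

section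
/- There is a finite set F ⊆ ℝ^d such that for every v ∈ ℝ^d there exist w ∈ F and m ∈ ℤ^d with (C+v) ∩ ℤ^d = m + ((C+w) ∩ ℤ^d). In particular, there are only finitely many isomorphism classes of conic R-modules. -/
open Set

set_option synthInstance.maxHeartbeats 400000
set_option maxHeartbeats 1000000

noncomputable section

lemma ιZ_sub (d : ℕ) (a b : Fin d → ℤ) : ιZ d (a - b) = ιZ d a - ιZ d b := by
  funext j; simp [ιZ]

lemma mem_latticePts_iff {d t : ℕ} (n : Fin t → ((Fin d → ℝ) →ₗ[ℝ] ℝ))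
    (hint : ∀ i (m : Fin d → ℤ), ∃ z : ℤ, n i (ιZ d m) = z)
    (v : Fin d → ℝ) (m : Fin d → ℤ) :
    m ∈ latticePts n v ↔ ∀ i, (⌈n i v⌉ : ℝ) ≤ n i (ιZ d m) := by
  unfold latticePts
  simp only [Set.mem_setOf_eq, map_sub, sub_nonneg]
  refine forall_congr' fun i => ?_
  obtain ⟨z, hz⟩ := hint i m
  rw [hz]
  constructor
  · intro h; exact_mod_cast Int.ceil_le.mpr h
  · intro h; exact le_trans (Int.le_ceil _) h

lemma latticePts_eq_of_ceil {d t : ℕ} (n : Fin t → ((Fin d → ℝ) →ₗ[ℝ] ℝ))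
    (hint : ∀ i (m : Fin d → ℤ), ∃ z : ℤ, n i (ιZ d m) = z)
    (u u' : Fin d → ℝ) (h : ∀ i, ⌈n i u⌉ = ⌈n i u'⌉) :
    latticePts n u = latticePts n u' := by
  ext m
  rw [mem_latticePts_iff n hint, mem_latticePts_iff n hint]
  exact forall_congr' fun i => by rw [h i]

lemma latticePts_translate {d t : ℕ} (n : Fin t → ((Fin d → ℝ) →ₗ[ℝ] ℝ))
    (m0 : Fin d → ℤ) (w : Fin d → ℝ) :
    latticePts n (ιZ d m0 + w) = (fun m' => m0 + m') '' latticePts n w := by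
  ext m
  constructor
  · intro hm
    refine ⟨m - m0, fun i => ?_, by simp⟩
    have := hm i
    rw [ιZ_sub]
    convert this using 2
    abel
  · rintro ⟨m', hm', rfl⟩
    intro i
    have := hm' i
    convert this using 2
    have : ιZ d (m0 + m') = ιZ d m0 + ιZ d m' := by funext j; simp [ιZ]
    rw [this]; abel

lemma conicA_eq_span (k : Type) [Field k] (d t : ℕ)
    (n : Fin t → ((Fin d → ℝ) →ₗ[ℝ] ℝ)) (v : Fin d → ℝ) :
    conicA k d t n v = Submodule.span ↥(toricR k d t n)
      ((fun m : Fin d → ℤ => (AddMonoidAlgebra.single m 1 : AddMonoidAlgebra k (Fin d → ℤ)))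
        '' latticePts n v) := by
  unfold conicA
  congr 1
  ext f
  simp only [Set.mem_setOf_eq, Set.mem_image, latticePts]
  constructor
  · rintro ⟨m, hm, rfl⟩; exact ⟨m, hm, rfl⟩
  · rintro ⟨m, hm, rfl⟩; exact ⟨m, hm, rfl⟩

/-- Multiplication by the unit monomial `x^{m0}` as an `R`-linear automorphism of `L`. -/
def shiftEquiv (k : Type) [Field k] (d t : ℕ) (n : Fin t → ((Fin d → ℝ) →ₗ[ℝ] ℝ))
    (m0 : Fin d → ℤ) :
    AddMonoidAlgebra k (Fin d → ℤ) ≃ₗ[↥(toricR k d t n)] AddMonoidAlgebra k (Fin d → ℤ) :=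
  { LinearMap.mulLeft ↥(toricR k d t n) (AddMonoidAlgebra.single m0 (1:k)) with
    invFun := fun f => AddMonoidAlgebra.single (-m0) (1:k) * f
    left_inv := fun f => by
      show AddMonoidAlgebra.single (-m0) (1:k) * (AddMonoidAlgebra.single m0 (1:k) * f) = f
      rw [← mul_assoc, AddMonoidAlgebra.single_mul_single, neg_add_cancel, mul_one,
        ← AddMonoidAlgebra.one_def, one_mul]
    right_inv := fun f => by
      show AddMonoidAlgebra.single m0 (1:k) * (AddMonoidAlgebra.single (-m0) (1:k) * f) = f
      rw [← mul_assoc, AddMonoidAlgebra.single_mul_single, add_neg_cancel, mul_one,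
        ← AddMonoidAlgebra.one_def, one_mul] }

lemma shiftEquiv_apply (k : Type) [Field k] (d t : ℕ) (n : Fin t → ((Fin d → ℝ) →ₗ[ℝ] ℝ))
    (m0 : Fin d → ℤ) (f : AddMonoidAlgebra k (Fin d → ℤ)) :
    shiftEquiv k d t n m0 f = AddMonoidAlgebra.single m0 (1:k) * f := rfl

lemma map_shift (k : Type) [Field k] (d t : ℕ) (n : Fin t → ((Fin d → ℝ) →ₗ[ℝ] ℝ))
    (m0 : Fin d → ℤ) (w : Fin d → ℝ)
    (h : latticePts n (ιZ d m0 + w) = (fun m' => m0 + m') '' latticePts n w) :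
    Submodule.map (shiftEquiv k d t n m0).toLinearMap (conicA k d t n w)
      = conicA k d t n (ιZ d m0 + w) := by
  rw [conicA_eq_span, conicA_eq_span, Submodule.map_span, ← Set.image_comp, h,
    ← Set.image_comp]
  refine congrArg _ (Set.image_congr fun a _ => ?_)
  show (shiftEquiv k d t n m0) (AddMonoidAlgebra.single a 1) = AddMonoidAlgebra.single (m0 + a) 1
  rw [shiftEquiv_apply, AddMonoidAlgebra.single_mul_single, mul_one]

lemma ceil_image_finite {d t : ℕ} (n : Fin t → ((Fin d → ℝ) →ₗ[ℝ] ℝ)) :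
    ((fun v : Fin d → ℝ => fun i => ⌈n i v⌉) ''
      {w : Fin d → ℝ | ∀ j, w j ∈ Set.Ico (0:ℝ) 1}).Finite := by
  set B : Fin t → ℝ := fun i => ∑ j, |n i (Pi.single j 1)| with hB
  refine Set.Finite.subset
    (Set.Finite.pi (fun i : Fin t => Set.finite_Icc (⌈-(B i)⌉) ⌈B i⌉)) ?_
  rintro c ⟨w, hw, rfl⟩
  refine Set.mem_univ_pi.mpr fun i => ?_
  have hb : |n i w| ≤ B i := by
    have hw' : w = ∑ j, Pi.single j (w j) := (Finset.univ_sum_single w).symm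
    have hsum : n i w = ∑ j, w j * n i (Pi.single j 1) := by
      conv_lhs => rw [hw']
      rw [map_sum]
      refine Finset.sum_congr rfl fun j _ => ?_
      have hps : (Pi.single j (w j) : Fin d → ℝ) = w j • (Pi.single j 1 : Fin d → ℝ) := by
        funext j'
        simp [Pi.single_apply, mul_ite]
      rw [hps, map_smul, smul_eq_mul]
    rw [hsum, hB]
    refine (Finset.abs_sum_le_sum_abs _ _).trans (Finset.sum_le_sum fun j _ => ?_)
    rw [abs_mul]
    have hwj : |w j| ≤ 1 := by
      rcases hw j with ⟨h0, h1⟩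
      rw [abs_of_nonneg h0]; linarith
    calc |w j| * |n i (Pi.single j 1)| ≤ 1 * |n i (Pi.single j 1)| :=
          mul_le_mul_of_nonneg_right hwj (abs_nonneg _)
      _ = _ := one_mul _
  obtain ⟨hl, hr⟩ := abs_le.mp hb
  exact Set.mem_Icc.mpr ⟨Int.ceil_le_ceil hl, Int.ceil_le_ceil hr⟩

/-- there is a finite set `F ⊆ ℝ^d` such that every conic lattice set is
a lattice translate of one with apex in `F`; in particular there are only finitely
many isomorphism classes of conic `R`-modules. -/
theorem stmt_8
    (d t : ℕ) (hd : 1 ≤ d)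
    (n : Fin t → ((Fin d → ℝ) →ₗ[ℝ] ℝ))
    (hne : ∀ i, n i ≠ 0)
    (hint : ∀ i (m : Fin d → ℤ), ∃ z : ℤ, n i (ιZ d m) = z)
    (hprim : ∀ i (z : ℤ), ∃ m : Fin d → ℤ, n i (ιZ d m) = z)
    (C : Set (Fin d → ℝ)) (hC : C = {x | ∀ i, 0 ≤ n i x})
    (hfull : (interior C).Nonempty)
    (hpointed : Submodule.span ℝ (Set.range n) = ⊤)
    (hirr : ∀ i, C ⊂ {x | ∀ j, j ≠ i → 0 ≤ n j x})
    (k : Type) [Field k] :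
    ∃ F : Finset (Fin d → ℝ), ∀ v : Fin d → ℝ, ∃ w ∈ F,
      (∃ m : Fin d → ℤ, latticePts n v = (fun m' => m + m') '' latticePts n w) ∧
      Nonempty (↥(conicA k d t n v) ≃ₗ[↥(toricR k d t n)] ↥(conicA k d t n w)) := by
  classical
  set c : (Fin d → ℝ) → (Fin t → ℤ) := fun v => fun i => ⌈n i v⌉ with hc
  set S : Set (Fin d → ℝ) := {w | ∀ j, w j ∈ Set.Ico (0:ℝ) 1} with hS
  have hfin : (c '' S).Finite := ceil_image_finite n
  set g : (Fin t → ℤ) → (Fin d → ℝ) := Function.invFunOn c S with hg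
  refine ⟨hfin.toFinset.image g, fun v => ?_⟩
  -- decompose v
  set m0 : Fin d → ℤ := fun j => ⌊v j⌋ with hm0
  set w0 : Fin d → ℝ := fun j => Int.fract (v j) with hw0
  have hv : v = ιZ d m0 + w0 := by
    funext j; simp [ιZ, hm0, hw0, Int.floor_add_fract]
  have hw0S : w0 ∈ S := fun j => ⟨Int.fract_nonneg _, Int.fract_lt_one _⟩
  have hmem : c w0 ∈ c '' S := ⟨w0, hw0S, rfl⟩
  set w : Fin d → ℝ := g (c w0) with hw
  have hwF : w ∈ hfin.toFinset.image g :=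
    Finset.mem_image.mpr ⟨c w0, hfin.mem_toFinset.mpr hmem, rfl⟩
  have hcw : c w = c w0 := Function.invFunOn_eq ⟨w0, hw0S, rfl⟩
  have hLeq : latticePts n w = latticePts n w0 :=
    latticePts_eq_of_ceil n hint w w0 (fun i => congrFun hcw i)
  have htrans : latticePts n (ιZ d m0 + w0) = (fun m' => m0 + m') '' latticePts n w0 :=
    latticePts_translate n m0 w0
  have htransw : latticePts n (ιZ d m0 + w) = (fun m' => m0 + m') '' latticePts n w :=
    latticePts_translate n m0 w
  refine ⟨w, hwF, ⟨m0, ?_⟩, ?_⟩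
  · rw [hv, htrans, hLeq]
  · have hmap : Submodule.map (shiftEquiv k d t n m0).toLinearMap (conicA k d t n w)
        = conicA k d t n v := by
      rw [map_shift k d t n m0 w htransw]
      have : conicA k d t n (ιZ d m0 + w) = conicA k d t n (ιZ d m0 + w0) := by
        rw [conicA_eq_span, conicA_eq_span, htransw, htrans, hLeq]
      rw [this, ← hv]
    exact ⟨(LinearEquiv.ofEq _ _ hmap).symm.trans
      ((shiftEquiv k d t n m0).submoduleMap (conicA k d t n w)).symm⟩
end
end
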